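/- If the polymorphic population state P* = Σ_{j=1}^k α_jδ_{x_j} is strongly unbeatable (there is ε > 0 such that E(P*,R) ≥ E(R,R) for all R ≠ P* with ‖R − P*‖ ≤ ε), then P* is Lyapunov stable for the replicator dynamics under the variational norm. -/

import Mathlib

open MeasureTheory Filter Topology

/-- Variational (strong) norm distance between two measures:
`‖P - Q‖ = 2 ⋅ sup_B |P(B) - Q(B)|` over Borel sets `B`. -/
noncomputable def vdist {S : Type*} [MeasurableSpace S] (P Q : Measure S) : ℝ :=
  2 * ⨆ B : {B : Set S // MeasurableSet B}, |(P B.1).toReal - (Q B.1).toReal|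

/-- Mean payoff `E(P,Q) = ∫∫ u(z,w) Q(dw) P(dz)`. -/
noncomputable def payE {S : Type*} [MeasurableSpace S] (u : S → S → ℝ) (P Q : Measure S) : ℝ :=
  ∫ z, ∫ w, u z w ∂Q ∂P

/-- Average success `σ(z,Q) = E(δ_z,Q) - E(Q,Q)`. -/
noncomputable def sigmaF {S : Type*} [MeasurableSpace S] (u : S → S → ℝ) (z : S)
    (Q : Measure S) : ℝ :=
  (∫ w, u z w ∂Q) - payE u Q Q

/-- `P` is a rest point of the replicator dynamics: `F(P)(B) = ∫_B σ(z,P) P(dz) = 0` for all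
Borel `B`. -/
def IsRestPoint {S : Type*} [MeasurableSpace S] (u : S → S → ℝ) (P : Measure S) : Prop :=
  ∀ B : Set S, MeasurableSet B → ∫ z in B, sigmaF u z P ∂P = 0

/-- A solution of the replicator dynamics `Q'(t)(B) = ∫_B σ(z,Q(t)) Q(t)(dz)`. -/
def IsReplicatorTrajectory {S : Type*} [MeasurableSpace S] (u : S → S → ℝ)
    (Q : ℝ → Measure S) : Prop :=
  (∀ t : ℝ, IsProbabilityMeasure (Q t)) ∧
  ∀ B : Set S, MeasurableSet B → ∀ t : ℝ, 0 ≤ t →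
    HasDerivAt (fun s => ((Q s) B).toReal) (∫ z in B, sigmaF u z (Q t) ∂(Q t)) t

/-- The polymorphic population state `P* = Σ_j α_j δ_{x_j}`. -/
noncomputable def polyState {S : Type*} [MeasurableSpace S] {k : ℕ} (α : Fin k → ℝ)
    (x : Fin k → S) : Measure S :=
  ∑ j : Fin k, ENNReal.ofReal (α j) • Measure.dirac (x j)

/-- The (topological) support of a measure. -/
def msupport {S : Type*} [TopologicalSpace S] [MeasurableSpace S] (P : Measure S) : Set S :=
  {z | ∀ U : Set S, IsOpen U → z ∈ U → 0 < P U}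

open Real Set

/-!
Write `q_j(t) = Q(t){x_j}`. The replicator equation gives `q_j' = q_j σ(x_j, Q)`, so the
Lyapunov function `V = Σ_j α_j log (α_j / q_j)` satisfies `V' = E(Q,Q) - E(P*,Q)`, which strong
unbeatability makes nonpositive as long as `Q` stays `ε`-close to `P*`. Conversely `V` controls
the distance: `(√q_j - √α_j)² ≤ V`, and `‖Q - P*‖ ≤ 4 Σ_j |q_j - α_j|` because `P*` lives on the
atoms `x_j`. So if `Q(0)` is close enough to `P*`, `V` never exceeds `V(0)` and `Q(t)` stays close
to `P*`. Since `σ ≥ -2 sup |u|`, the atoms satisfy `q_j(t) ≥ q_j(0) e^{-2 t sup |u|} > 0`, which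
keeps `V` differentiable along the whole trajectory.
-/

lemma sq_sqrt_sub_sqrt_le {a b : ℝ} (ha : 0 < a) (hb : 0 < b) :
    (√b - √a) ^ 2 ≤ b - a + a * log (a / b) := by
  have hsa := sqrt_pos.2 ha
  have hsb := sqrt_pos.2 hb
  have hlog : log (a / b) = 2 * log (√a / √b) := by
    rw [← log_rpow (by positivity), div_rpow hsa.le hsb.le]
    norm_cast
    simp [sq_sqrt ha.le, sq_sqrt hb.le]
  have := one_sub_inv_le_log_of_pos (div_pos hsa hsb)
  rw [inv_div] at this
  have hmul : a * (1 - √b / √a) = a - √a * √b := by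
    field_simp
    nlinarith [mul_self_sqrt ha.le]
  nlinarith [sq_sqrt ha.le, sq_sqrt hb.le]

lemma le_of_hasDerivAt_nonpos_of_lt {V V' : ℝ → ℝ} {l : ℝ}
    (hV : ∀ t, 0 ≤ t → HasDerivAt V (V' t) t) (hV' : ∀ t, 0 ≤ t → V t < l → V' t ≤ 0)
    (h0 : V 0 < l) {t : ℝ} (ht : 0 ≤ t) : V t ≤ V 0 := by
  -- `V' ≤ 0` is only known below `l`, so fence `V` by the strictly increasing barriers
  -- `V 0 + δ (1 + s)`, which stay below `l` on `[0, t]` for small `δ`, and let `δ → 0`.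
  have fence : ∀ δ, 0 < δ → V 0 + δ * (1 + t) < l → V t ≤ V 0 + δ * (1 + t) := by
    intro δ hδ hδl
    refine image_le_of_deriv_right_lt_deriv_boundary (B := fun s => V 0 + δ * (1 + s))
      (fun s hs => (hV s hs.1).continuousAt.continuousWithinAt)
      (fun s hs => (hV s hs.1).hasDerivWithinAt) (by simpa using hδ.le)
      (fun s => ((hasDerivAt_id s).const_add 1 |>.const_mul δ |>.const_add (V 0)))
      (fun s hs hVs => ?_) ⟨ht, le_rfl⟩
    have : V s < l := by rw [hVs]; nlinarith [hs.2]
    simpa using (hV' s hs.1 this).trans_lt hδ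
  have hlim : Tendsto (fun δ => V 0 + δ * (1 + t)) (𝓝 0) (𝓝 (V 0)) := by
    simpa using ((tendsto_id (x := 𝓝 (0 : ℝ))).mul_const (1 + t)).const_add (V 0)
  refine ge_of_tendsto (hlim.mono_left (nhdsWithin_le_nhds (s := Ioi 0))) ?_
  filter_upwards [self_mem_nhdsWithin, nhdsWithin_le_nhds (hlim.eventually (gt_mem_nhds h0))]
    with δ hδ hδl using fence δ hδ hδl

lemma pos_of_hasDerivAt_self_mul {f g : ℝ → ℝ} {C : ℝ}
    (hf : ∀ t, 0 ≤ t → HasDerivAt f (f t * g t) t) (hf₀ : ∀ t, 0 ≤ f t) (hg : ∀ t, -C ≤ g t)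
    (h0 : 0 < f 0) {t : ℝ} (ht : 0 ≤ t) : 0 < f t := by
  have hG : ∀ s, 0 ≤ s → HasDerivAt (fun s => f s * Real.exp (C * s))
      (f s * Real.exp (C * s) * (g s + C)) s := fun s hs =>
    ((hf s hs).mul (((hasDerivAt_id s).const_mul C).exp)).congr_deriv (by simp; ring)
  have hmono : MonotoneOn (fun s => f s * Real.exp (C * s)) (Ici 0) := by
    refine monotoneOn_of_deriv_nonneg (convex_Ici 0)
      (fun s hs => (hG s hs).continuousAt.continuousWithinAt)
      (fun s hs => (hG s (interior_subset hs)).differentiableAt.differentiableWithinAt)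
      fun s hs => ?_
    rw [(hG s (interior_subset hs)).deriv]
    exact mul_nonneg (mul_nonneg (hf₀ s) (Real.exp_pos _).le) (by linarith [hg s])
  have hGt : 0 < f t * Real.exp (C * t) := by
    simpa using h0.trans_le (by simpa using hmono self_mem_Ici ht ht)
  exact pos_of_mul_pos_left hGt (Real.exp_pos _).le

noncomputable def relEntropy {ι : Type*} [Fintype ι] (α q : ι → ℝ) : ℝ :=
  ∑ j, α j * log (α j / q j)

section RelEntropy

variable {ι : Type*} [Fintype ι] {α q : ι → ℝ}

lemma sum_sub_add_mul_log_le_relEntropy (hαsum : ∑ j, α j = 1) (hqsum : ∑ j, q j ≤ 1) :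
    ∑ j, (q j - α j + α j * log (α j / q j)) ≤ relEntropy α q := by
  rw [Finset.sum_add_distrib, Finset.sum_sub_distrib, hαsum, relEntropy]
  linarith

lemma hasDerivAt_relEntropy {q : ι → ℝ → ℝ} {q' : ι → ℝ} {t : ℝ}
    (hq : ∀ j, HasDerivAt (q j) (q' j) t) (hqt : ∀ j, q j t ≠ 0) :
    HasDerivAt (fun s => relEntropy α (q · s)) (-∑ j, α j * q' j / q j t) t := by
  rw [← Finset.sum_neg_distrib]
  refine HasDerivAt.fun_sum fun j _ => ?_
  rcases eq_or_ne (α j) 0 with h | h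
  · simpa [h] using hasDerivAt_const t (0 : ℝ)
  · exact ((((hasDerivAt_const t (α j)).fun_div (hq j) (hqt j)).log
      (div_ne_zero h (hqt j))).const_mul (α j)).congr_deriv (by field_simp; ring)

variable (hα : ∀ j, 0 < α j) (hq : ∀ j, 0 < q j) (hαsum : ∑ j, α j = 1) (hqsum : ∑ j, q j ≤ 1)
include hα hq hαsum hqsum

lemma relEntropy_nonneg : 0 ≤ relEntropy α q :=
  (Finset.sum_nonneg fun j _ => (sq_nonneg _).trans (sq_sqrt_sub_sqrt_le (hα j) (hq j))).trans
    (sum_sub_add_mul_log_le_relEntropy hαsum hqsum)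

lemma sq_sqrt_sub_sqrt_le_relEntropy (j : ι) : (√(q j) - √(α j)) ^ 2 ≤ relEntropy α q :=
  (sq_sqrt_sub_sqrt_le (hα j) (hq j)).trans <|
    (Finset.single_le_sum (fun i _ => (sq_nonneg _).trans (sq_sqrt_sub_sqrt_le (hα i) (hq i)))
      (Finset.mem_univ j)).trans (sum_sub_add_mul_log_le_relEntropy hαsum hqsum)

lemma abs_sub_le_three_mul_sqrt_relEntropy (hle : relEntropy α q ≤ 1) (j : ι) :
    |q j - α j| ≤ 3 * √(relEntropy α q) := by
  set D := relEntropy α q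
  have hsq : |√(q j) - √(α j)| ≤ √D :=
    abs_le_sqrt (sq_sqrt_sub_sqrt_le_relEntropy hα hq hαsum hqsum j)
  have hD : √D ≤ 1 := sqrt_le_one.2 hle
  have hαj : √(α j) ≤ 1 := sqrt_le_one.2 <| hαsum ▸
    Finset.single_le_sum (fun i _ => (hα i).le) (Finset.mem_univ j)
  have hfac : |q j - α j| = |√(q j) - √(α j)| * (√(q j) + √(α j)) := by
    rw [← abs_of_nonneg (by positivity : 0 ≤ √(q j) + √(α j)), ← abs_mul]
    congr 1
    nlinarith [sq_sqrt (hq j).le, sq_sqrt (hα j).le]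
  have hsum : √(q j) + √(α j) ≤ 3 := by
    linarith [le_abs_self (√(q j) - √(α j))]
  rw [hfac]
  nlinarith [abs_nonneg (√(q j) - √(α j)), sqrt_nonneg (q j), sqrt_nonneg (α j)]

end RelEntropy

section PolyState

variable {S : Type*} [MeasurableSpace S] {k : ℕ}

lemma isProbabilityMeasure_polyState {α : Fin k → ℝ} (hα : ∀ j, 0 ≤ α j)
    (hαsum : ∑ j, α j = 1) (x : Fin k → S) : IsProbabilityMeasure (polyState α x) := by
  constructor
  simp [polyState, ← ENNReal.ofReal_sum_of_nonneg fun j _ => hα j, hαsum]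

variable [MeasurableSingletonClass S]

lemma integral_polyState {α : Fin k → ℝ} (hα : ∀ j, 0 ≤ α j) (x : Fin k → S)
    (f : S → ℝ) : ∫ z, f z ∂(polyState α x) = ∑ j, α j * f (x j) := by
  rw [polyState, integral_finsetSum_measure fun j _ =>
    ((integrable_const (f (x j))).congr (ae_eq_dirac f).symm).smul_measure ENNReal.ofReal_ne_top]
  simp [integral_smul_measure, ENNReal.toReal_ofReal (hα _)]

lemma polyState_compl_range (α : Fin k → ℝ) (x : Fin k → S) :
    polyState α x (Set.range x)ᶜ = 0 := by
  simp [polyState, Measure.dirac_apply]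

lemma polyState_real_singleton {α : Fin k → ℝ} (hα : ∀ j, 0 ≤ α j) {x : Fin k → S}
    (hx : Function.Injective x) (j : Fin k) : (polyState α x).real {x j} = α j := by
  rw [← integral_indicator_one (measurableSet_singleton _), integral_polyState hα,
    Finset.sum_eq_single j (fun i _ hij => by simp [hx.ne hij]) (by simp)]
  simp

end PolyState

section TotalVariation

variable {S : Type*} [MeasurableSpace S] {μ ν : Measure S}

lemma vdist_le {c : ℝ} (h : ∀ B, MeasurableSet B → |μ.real B - ν.real B| ≤ c) :
    vdist μ ν ≤ 2 * c :=
  mul_le_mul_of_nonneg_left (ciSup_le fun B => h B.1 B.2) zero_le_two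

variable [IsProbabilityMeasure μ] [IsProbabilityMeasure ν]

lemma two_mul_abs_measureReal_sub_le_vdist {B : Set S} (hB : MeasurableSet B) :
    2 * |μ.real B - ν.real B| ≤ vdist μ ν := by
  have hbdd : BddAbove (Set.range fun B : {B : Set S // MeasurableSet B} =>
      |μ.real B.1 - ν.real B.1|) := ⟨1, by
    rintro _ ⟨⟨B, -⟩, rfl⟩
    have := measureReal_le_one (μ := μ) (s := B)
    have := measureReal_le_one (μ := ν) (s := B)
    exact abs_sub_le_iff.2 ⟨by linarith [measureReal_nonneg (μ := ν) (s := B)],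
      by linarith [measureReal_nonneg (μ := μ) (s := B)]⟩⟩
  exact mul_le_mul_of_nonneg_left (le_ciSup hbdd ⟨B, hB⟩) zero_le_two

variable [MeasurableSingletonClass S]

lemma abs_measureReal_sub_le_of_compl_null {T : Finset S} (hT : ν (↑T)ᶜ = 0) (B : Set S) :
    |μ.real B - ν.real B| ≤ 2 * ∑ z ∈ T, |μ.real {z} - ν.real {z}| := by
  classical
  set D := ∑ z ∈ T, |μ.real {z} - ν.real {z}|
  have hsubset : ∀ U ⊆ T, |μ.real U - ν.real U| ≤ D := fun U hU => by
    rw [← sum_measureReal_singleton, ← sum_measureReal_singleton, ← Finset.sum_sub_distrib]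
    exact (Finset.abs_sum_le_sum_abs _ _).trans
      (Finset.sum_le_sum_of_subset_of_nonneg hU fun _ _ _ => abs_nonneg _)
  have hBT : B ∩ T = ↑(T.filter (· ∈ B)) := by ext; simp [and_comm]
  have hν : ν.real (B \ T) = 0 :=
    measureReal_mono_null (s₂ := (↑T)ᶜ) (fun z hz => hz.2) (by rw [measureReal_def, hT]; rfl)
  have hμ : μ.real (B \ T) ≤ ν.real T - μ.real T := by
    have hTν : ν.real T = 1 := by
      rw [← probReal_univ (μ := ν), ← measureReal_add_measureReal_compl T.measurableSet]
      simp [measureReal_def, hT]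
    rw [hTν, ← probReal_univ (μ := μ), ← measureReal_add_measureReal_compl T.measurableSet]
    simpa using measureReal_mono fun z hz => hz.2
  rw [← measureReal_inter_add_sdiff (s := B) T.measurableSet (μ := μ),
    ← measureReal_inter_add_sdiff (s := B) T.measurableSet (μ := ν), hν, hBT]
  have hpos : 0 ≤ μ.real (B \ T) := measureReal_nonneg
  have h1 := hsubset _ (Finset.filter_subset (· ∈ B) T)
  have h2 := hsubset T subset_rfl
  rw [abs_le] at *
  constructor <;> linarith

end TotalVariation

section PolyStateDistance

variable {S : Type*} [MeasurableSpace S] [MeasurableSingletonClass S] {k : ℕ} {α : Fin k → ℝ}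
  {x : Fin k → S}

lemma vdist_polyState_le (hα : ∀ j, 0 ≤ α j) (hαsum : ∑ j, α j = 1) (hx : Function.Injective x)
    (Q : Measure S) [IsProbabilityMeasure Q] :
    vdist Q (polyState α x) ≤ 4 * ∑ j, |Q.real {x j} - α j| := by
  classical
  have := isProbabilityMeasure_polyState hα hαsum x
  have hT : polyState α x (↑(Finset.univ.image x))ᶜ = 0 := by
    simpa using polyState_compl_range α x
  have hsum : ∑ z ∈ Finset.univ.image x, |Q.real {z} - (polyState α x).real {z}| =
      ∑ j, |Q.real {x j} - α j| := by
    rw [Finset.sum_image hx.injOn]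
    simp_rw [polyState_real_singleton hα hx]
  have := vdist_le fun B _ => (abs_measureReal_sub_le_of_compl_null hT B).trans_eq
    (congrArg (2 * ·) hsum)
  linarith

lemma sum_measureReal_singleton_le_one (hx : Function.Injective x) (Q : Measure S)
    [IsProbabilityMeasure Q] : ∑ j, Q.real {x j} ≤ 1 := by
  classical
  calc ∑ j, Q.real {x j} = ∑ z ∈ Finset.univ.image x, Q.real {z} :=
        (Finset.sum_image (f := fun z => Q.real {z}) hx.injOn).symm
    _ ≤ 1 := by rw [sum_measureReal_singleton]; exact measureReal_le_one

variable (hα : ∀ j, 0 < α j) (hx : Function.Injective x)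
include hα hx

lemma exists_forall_vdist_lt_of_relEntropy_lt (hαsum : ∑ j, α j = 1) {m : ℝ} (hm : 0 < m) :
    ∃ l > 0, ∀ Q : Measure S, IsProbabilityMeasure Q → (∀ j, 0 < Q.real {x j}) →
      relEntropy α (fun j => Q.real {x j}) < l → vdist Q (polyState α x) < m := by
  have : ∀ᶠ D in 𝓝 (0 : ℝ), D ≤ 1 ∧ 12 * k * √D < m := (eventually_le_nhds one_pos).and <|
    ((continuous_const.mul continuous_sqrt).tendsto' 0 0 (by simp)).eventually (gt_mem_nhds hm)
  obtain ⟨l, hl, hD⟩ := Metric.eventually_nhds_iff.1 this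
  refine ⟨l, hl, fun Q _ hpos hlt => ?_⟩
  have hqsum := sum_measureReal_singleton_le_one hx Q
  have hD0 := relEntropy_nonneg hα hpos hαsum hqsum
  obtain ⟨hle, hsmall⟩ := hD (by rwa [Real.dist_0_eq_abs, abs_of_nonneg hD0])
  calc vdist Q (polyState α x) ≤ 4 * ∑ j, |Q.real {x j} - α j| :=
        vdist_polyState_le (fun j => (hα j).le) hαsum hx Q
    _ ≤ 4 * ∑ _j : Fin k, 3 * √(relEntropy α fun j => Q.real {x j}) := by
        gcongr with j
        exact abs_sub_le_three_mul_sqrt_relEntropy hα hpos hαsum hqsum hle j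
    _ = 12 * k * √(relEntropy α fun j => Q.real {x j}) := by
        rw [Finset.sum_const, Finset.card_univ, Fintype.card_fin, nsmul_eq_mul]; ring
    _ < m := hsmall

lemma exists_forall_relEntropy_lt_of_vdist_lt (hαsum : ∑ j, α j = 1) {l : ℝ} (hl : 0 < l) :
    ∃ η > 0, ∀ Q : Measure S, IsProbabilityMeasure Q → vdist Q (polyState α x) < η →
      (∀ j, 0 < Q.real {x j}) ∧ relEntropy α (fun j => Q.real {x j}) < l := by
  have hcont : ContinuousAt (relEntropy α) α :=
    tendsto_finsetSum _ fun j _ =>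
      show ContinuousAt (fun q : Fin k → ℝ => α j * log (α j / q j)) α from
      ((continuousAt_const.div (continuous_apply j).continuousAt (hα j).ne').log
        (by simp [(hα j).ne'])).const_mul (α j)
  have hpos : ∀ᶠ q in 𝓝 α, ∀ j, 0 < q j :=
    eventually_all.2 fun j => ((continuous_apply j).tendsto α).eventually (lt_mem_nhds (hα j))
  have : ∀ᶠ q in 𝓝 α, (∀ j, 0 < q j) ∧ relEntropy α q < l :=
    hpos.and (hcont.eventually (gt_mem_nhds (by simpa [relEntropy, (hα _).ne'] using hl)))
  obtain ⟨η, hη, hq⟩ := Metric.eventually_nhds_iff.1 this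
  refine ⟨2 * η, by positivity, fun Q _ hQ => hq ((dist_pi_lt_iff hη).2 fun j => ?_)⟩
  have := isProbabilityMeasure_polyState (fun j => (hα j).le) hαsum x
  have := two_mul_abs_measureReal_sub_le_vdist (μ := Q) (ν := polyState α x)
    (measurableSet_singleton (x j))
  rw [polyState_real_singleton (fun j => (hα j).le) hx] at this
  rw [Real.dist_eq]
  linarith

end PolyStateDistance

section Replicator

variable {S : Type*} [MeasurableSpace S] {u : S → S → ℝ} {M : ℝ}

lemma abs_integral_le_of_abs_le (Q : Measure S) [IsProbabilityMeasure Q] {f : S → ℝ}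
    (hf : ∀ w, |f w| ≤ M) : |∫ w, f w ∂Q| ≤ M := by
  simpa using norm_integral_le_of_norm_le_const (μ := Q) (Eventually.of_forall fun w =>
    (Real.norm_eq_abs (f w)).trans_le (hf w))

lemma neg_two_mul_le_sigmaF (hM : ∀ z w, |u z w| ≤ M) (z : S) (Q : Measure S)
    [IsProbabilityMeasure Q] : -(2 * M) ≤ sigmaF u z Q := by
  have h₁ := abs_integral_le_of_abs_le Q (hM z)
  have h₂ := abs_integral_le_of_abs_le Q fun z => abs_integral_le_of_abs_le Q (hM z)
  rw [abs_le] at h₁ h₂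
  rw [sigmaF, payE]
  linarith

variable [MeasurableSingletonClass S] {Q : ℝ → Measure S}

lemma IsReplicatorTrajectory.hasDerivAt_measureReal_singleton (hQ : IsReplicatorTrajectory u Q)
    (z : S) {t : ℝ} (ht : 0 ≤ t) :
    HasDerivAt (fun s => (Q s).real {z}) ((Q t).real {z} * sigmaF u z (Q t)) t := by
  have := hQ.2 {z} (measurableSet_singleton z) t ht
  rwa [integral_singleton, smul_eq_mul] at this

lemma IsReplicatorTrajectory.measureReal_singleton_pos (hQ : IsReplicatorTrajectory u Q)
    (hM : ∀ z w, |u z w| ≤ M) {z : S} (h0 : 0 < (Q 0).real {z}) {t : ℝ} (ht : 0 ≤ t) :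
    0 < (Q t).real {z} :=
  have := hQ.1
  pos_of_hasDerivAt_self_mul (fun _ => hQ.hasDerivAt_measureReal_singleton z)
    (fun _ => measureReal_nonneg) (fun s => neg_two_mul_le_sigmaF hM z (Q s)) h0 ht

lemma sum_mul_sigmaF_eq {k : ℕ} {α : Fin k → ℝ} (hα : ∀ j, 0 ≤ α j) (hαsum : ∑ j, α j = 1)
    (x : Fin k → S) (R : Measure S) :
    ∑ j, α j * sigmaF u (x j) R = payE u (polyState α x) R - payE u R R := by
  simp_rw [sigmaF, mul_sub, Finset.sum_sub_distrib, ← Finset.sum_mul, hαsum, one_mul]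
  unfold payE
  rw [integral_polyState hα]

lemma IsReplicatorTrajectory.hasDerivAt_relEntropy (hQ : IsReplicatorTrajectory u Q) {k : ℕ}
    {α : Fin k → ℝ} (hα : ∀ j, 0 ≤ α j) (hαsum : ∑ j, α j = 1) (x : Fin k → S) {t : ℝ}
    (ht : 0 ≤ t) (hpos : ∀ j, 0 < (Q t).real {x j}) :
    HasDerivAt (fun s => relEntropy α fun j => (Q s).real {x j})
      (payE u (Q t) (Q t) - payE u (polyState α x) (Q t)) t := by
  convert _root_.hasDerivAt_relEntropy (α := α)
    (fun j => hQ.hasDerivAt_measureReal_singleton (x j) ht) fun j => (hpos j).ne' using 1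
  rw [← neg_sub, ← sum_mul_sigmaF_eq hα hαsum]
  congr 1
  refine Finset.sum_congr rfl fun j _ => ?_
  field_simp [(hpos j).ne']

end Replicator

theorem strongly_unbeatable_implies_lyapunov_stable_general
    {S : Type*} [MeasurableSpace S] [TopologicalSpace S] [PolishSpace S] [BorelSpace S]
    (u : S → S → ℝ)
    (hu_bdd : ∃ M : ℝ, ∀ z w : S, |u z w| ≤ M)
    {k : ℕ} (x : Fin k → S) (hx : Function.Injective x)
    (α : Fin k → ℝ) (hα : ∀ j, 0 < α j) (hαsum : ∑ j, α j = 1)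
    -- strong unbeatability of `P*`:
    (hunbeat : ∃ ε : ℝ, 0 < ε ∧ ∀ R : Measure S, IsProbabilityMeasure R →
      R ≠ polyState α x → vdist R (polyState α x) ≤ ε →
        payE u R R ≤ payE u (polyState α x) R) :
    -- Lyapunov stability:
    ∀ ε' : ℝ, 0 < ε' → ∃ η : ℝ, 0 < η ∧
      ∀ Q : ℝ → Measure S, IsReplicatorTrajectory u Q →
        vdist (Q 0) (polyState α x) < η →
          ∀ t : ℝ, 0 ≤ t → vdist (Q t) (polyState α x) < ε' := by
  obtain ⟨M, hM⟩ := hu_bdd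
  obtain ⟨ε, hε, hunbeat⟩ := hunbeat
  intro ε' hε'
  obtain ⟨l, hl, hclose⟩ :=
    exists_forall_vdist_lt_of_relEntropy_lt hα hx hαsum (lt_min hε hε')
  obtain ⟨η, hη, hstart⟩ := exists_forall_relEntropy_lt_of_vdist_lt hα hx hαsum hl
  refine ⟨η, hη, fun Q hQ hQ0 t ht => ?_⟩
  have := hQ.1
  obtain ⟨hpos0, hV0⟩ := hstart (Q 0) inferInstance hQ0
  have hpos : ∀ s, 0 ≤ s → ∀ j, 0 < (Q s).real {x j} := fun s hs j =>
    hQ.measureReal_singleton_pos hM (hpos0 j) hs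
  have hdescent : ∀ s, 0 ≤ s → (relEntropy α fun j => (Q s).real {x j}) < l →
      payE u (Q s) (Q s) - payE u (polyState α x) (Q s) ≤ 0 := fun s hs hVs => by
    have hnear := (hclose (Q s) inferInstance (hpos s hs) hVs).le.trans (min_le_left _ _)
    by_cases hPs : Q s = polyState α x
    · simp [hPs]
    · exact sub_nonpos.2 (hunbeat (Q s) inferInstance hPs hnear)
  have hVt := le_of_hasDerivAt_nonpos_of_lt
    (fun s hs => hQ.hasDerivAt_relEntropy (fun j => (hα j).le) hαsum x hs (hpos s hs))
    hdescent hV0 ht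
  exact (hclose (Q t) inferInstance (hpos t ht) (hVt.trans_lt hV0)).trans_le (min_le_right _ _)

/-- a strongly unbeatable polymorphic population state `P* = Σ_j α_j δ_{x_j}`
is Lyapunov stable for the replicator dynamics under the variational norm. -/
theorem strongly_unbeatable_implies_lyapunov_stable
    {S : Type*} [MeasurableSpace S] [TopologicalSpace S] [PolishSpace S] [BorelSpace S]
    (u : S → S → ℝ) (hu_meas : Measurable (Function.uncurry u))
    (hu_bdd : ∃ M : ℝ, ∀ z w : S, |u z w| ≤ M)
    {k : ℕ} (hk : 0 < k) (x : Fin k → S) (hx : Function.Injective x)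
    (α : Fin k → ℝ) (hα : ∀ j, 0 < α j) (hαsum : ∑ j, α j = 1)
    -- strong unbeatability of `P*`:
    (hunbeat : ∃ ε : ℝ, 0 < ε ∧ ∀ R : Measure S, IsProbabilityMeasure R →
      R ≠ polyState α x → vdist R (polyState α x) ≤ ε →
        payE u R R ≤ payE u (polyState α x) R) :
    -- Lyapunov stability:
    ∀ ε' : ℝ, 0 < ε' → ∃ η : ℝ, 0 < η ∧
      ∀ Q : ℝ → Measure S, IsReplicatorTrajectory u Q →
        vdist (Q 0) (polyState α x) < η →
          ∀ t : ℝ, 0 ≤ t → vdist (Q t) (polyState α x) < ε' :=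
  strongly_unbeatable_implies_lyapunov_stable_general u hu_bdd x hx α hα hαsum hunbeat
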